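/- arXiv:1901.07581 — 8 statements merged into one kernel-verified Lean document; each statement's English description precedes it below -/
import Mathlib

section
/- Let A be a set and let L be the sublattice of ℝ^(ℝ^A) generated by the evaluation functionals {δ_a : a ∈ A}. Let 𝒩 be the set of all lattice seminorms ν on L with ν(δ_a) ≤ 1 for every a ∈ A. Then for each f ∈ L, the quantity ‖f‖ := sup_{ν ∈ 𝒩} ν(f) is finite. -/
noncomputable section

/-- Membership in the vector sublattice generated by a set `S` in a vector lattice `X`. -/
inductive Gen {X : Type*} [AddCommGroup X] [Lattice X] [Module ℝ X] (S : Set X) : X → Prop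
  | of {f : X} : f ∈ S → Gen S f
  | add {f g : X} : Gen S f → Gen S g → Gen S (f + g)
  | smul (c : ℝ) {f : X} : Gen S f → Gen S (c • f)
  | sup {f g : X} : Gen S f → Gen S g → Gen S (f ⊔ g)
  | inf {f g : X} : Gen S f → Gen S g → Gen S (f ⊓ g)

/-- `ν` is a lattice seminorm on the subset `L` of the vector lattice `X`. -/
def IsLatticeSeminormOn {X : Type*} [AddCommGroup X] [Lattice X] [Module ℝ X]
    (L : Set X) (ν : X → ℝ) : Prop :=
  (∀ (c : ℝ), ∀ f ∈ L, ν (c • f) = |c| * ν f) ∧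
  (∀ f ∈ L, ∀ g ∈ L, ν (f + g) ≤ ν f + ν g) ∧
  (∀ f ∈ L, ∀ g ∈ L, |f| ≤ |g| → ν f ≤ ν g)

/-- The evaluation functional `δ_a : ℝ^A → ℝ`. -/
def delta {A : Type*} (a : A) : (A → ℝ) → ℝ := fun x => x a

section Aux

variable {A : Type*}

lemma gen_neg {f : (A → ℝ) → ℝ} (hf : Gen (Set.range (delta (A := A))) f) :
    Gen (Set.range (delta (A := A))) (-f) := by
  have := Gen.smul (-1) hf
  simpa using this

lemma gen_sub {f g : (A → ℝ) → ℝ} (hf : Gen (Set.range (delta (A := A))) f)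
    (hg : Gen (Set.range (delta (A := A))) g) :
    Gen (Set.range (delta (A := A))) (f - g) := by
  have := Gen.add hf (gen_neg hg)
  simpa [sub_eq_add_neg] using this

lemma gen_abs {f : (A → ℝ) → ℝ} (hf : Gen (Set.range (delta (A := A))) f) :
    Gen (Set.range (delta (A := A))) |f| := by
  have : |f| = f ⊔ (-f) := by
    ext x; simp [abs]
  rw [this]
  exact Gen.sup hf (gen_neg hf)

lemma key {f : (A → ℝ) → ℝ} (hf : Gen (Set.range (delta (A := A))) f) :
    ∃ M : ℝ, ∀ ν : ((A → ℝ) → ℝ) → ℝ,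
      IsLatticeSeminormOn {g | Gen (Set.range (delta (A := A))) g} ν →
      (∀ a : A, ν (delta a) ≤ 1) → ν f ≤ M := by
  induction hf with
  | of h =>
    obtain ⟨a, rfl⟩ := h
    exact ⟨1, fun ν _ hδ => hδ a⟩
  | add hf hg ihf ihg =>
    obtain ⟨Mf, hMf⟩ := ihf
    obtain ⟨Mg, hMg⟩ := ihg
    refine ⟨Mf + Mg, fun ν hν hδ => ?_⟩
    calc ν _ ≤ ν _ + ν _ := hν.2.1 _ hf _ hg
    _ ≤ Mf + Mg := add_le_add (hMf ν hν hδ) (hMg ν hν hδ)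
  | smul c hf ihf =>
    obtain ⟨Mf, hMf⟩ := ihf
    refine ⟨|c| * max Mf 0, fun ν hν hδ => ?_⟩
    rw [hν.1 c _ hf]
    have h0 : ν _ ≤ max Mf 0 := le_trans (hMf ν hν hδ) (le_max_left _ _)
    exact mul_le_mul_of_nonneg_left h0 (abs_nonneg c)
  | @sup f g hf hg ihf ihg =>
    obtain ⟨Mf, hMf⟩ := ihf
    obtain ⟨Mg, hMg⟩ := ihg
    refine ⟨Mf + Mg, fun ν hν hδ => ?_⟩
    obtain ⟨hsmul, hadd, hmono⟩ := hν
    have hnegf : ν (f - g) ≤ ν f + ν g := by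
      have h1 : ν (f + (-1 : ℝ) • g) ≤ ν f + ν ((-1 : ℝ) • g) :=
        hadd _ hf _ (Gen.smul _ hg)
      have h2 : ν (-g) = ν g := by
        have := hsmul (-1) _ hg; simpa using this
      simpa [sub_eq_add_neg, h2] using h1
    have habs : ν |f - g| ≤ ν f + ν g := by
      refine le_trans (hmono _ (gen_abs (gen_sub hf hg)) _ (gen_sub hf hg) ?_) hnegf
      simp
    have heq : f ⊔ g = (2⁻¹ : ℝ) • (f + g + |f - g|) := by
      ext x
      have := max_add_min (f x) (g x)
      have habs : |f x - g x| = max (f x) (g x) - min (f x) (g x) := by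
        rcases le_total (f x) (g x) with h | h <;>
          simp [abs_of_nonneg, abs_of_nonpos, max_eq_left, max_eq_right, min_eq_left,
            min_eq_right, h, sub_nonneg, sub_nonpos] <;> ring
      simp only [Pi.sup_apply, Pi.smul_apply, Pi.add_apply, Pi.abs_apply, Pi.sub_apply, smul_eq_mul]
      rw [habs]
      linarith
    rw [heq, hsmul _ _ (Gen.add (Gen.add hf hg) (gen_abs (gen_sub hf hg)))]
    have h3 : ν (f + g + |f - g|) ≤ (ν f + ν g) + (ν f + ν g) := by
      calc ν (f + g + |f - g|) ≤ ν (f + g) + ν |f - g| :=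
            hadd _ (Gen.add hf hg) _ (gen_abs (gen_sub hf hg))
      _ ≤ (ν f + ν g) + (ν f + ν g) := add_le_add (hadd _ hf _ hg) habs
    have := hMf ν ⟨hsmul, hadd, hmono⟩ hδ
    have := hMg ν ⟨hsmul, hadd, hmono⟩ hδ
    rw [abs_of_nonneg (by norm_num : (0:ℝ) ≤ 2⁻¹)]
    linarith
  | @inf f g hf hg ihf ihg =>
    obtain ⟨Mf, hMf⟩ := ihf
    obtain ⟨Mg, hMg⟩ := ihg
    refine ⟨Mf + Mg, fun ν hν hδ => ?_⟩
    obtain ⟨hsmul, hadd, hmono⟩ := hν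
    have hnegf : ν (f - g) ≤ ν f + ν g := by
      have h1 : ν (f + (-1 : ℝ) • g) ≤ ν f + ν ((-1 : ℝ) • g) :=
        hadd _ hf _ (Gen.smul _ hg)
      have h2 : ν (-g) = ν g := by
        have := hsmul (-1) _ hg; simpa using this
      simpa [sub_eq_add_neg, h2] using h1
    have habs : ν ((-1 : ℝ) • |f - g|) ≤ ν f + ν g := by
      rw [hsmul _ _ (gen_abs (gen_sub hf hg))]
      simp only [abs_neg, abs_one, one_mul]
      refine le_trans (hmono _ (gen_abs (gen_sub hf hg)) _ (gen_sub hf hg) ?_) hnegf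
      simp
    have heq : f ⊓ g = (2⁻¹ : ℝ) • (f + g + (-1 : ℝ) • |f - g|) := by
      ext x
      have habs : |f x - g x| = max (f x) (g x) - min (f x) (g x) := by
        rcases le_total (f x) (g x) with h | h <;>
          simp [abs_of_nonneg, abs_of_nonpos, max_eq_left, max_eq_right, min_eq_left,
            min_eq_right, h, sub_nonneg, sub_nonpos] <;> ring
      have := max_add_min (f x) (g x)
      simp only [Pi.inf_apply, Pi.smul_apply, Pi.add_apply, Pi.abs_apply, Pi.sub_apply, smul_eq_mul]
      rw [habs]
      linarith
    have hmem : Gen (Set.range (delta (A := A))) (f + g + (-1 : ℝ) • |f - g|) :=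
      Gen.add (Gen.add hf hg) (Gen.smul _ (gen_abs (gen_sub hf hg)))
    rw [heq, hsmul _ _ hmem]
    have h3 : ν (f + g + (-1 : ℝ) • |f - g|) ≤ (ν f + ν g) + (ν f + ν g) := by
      calc ν (f + g + (-1 : ℝ) • |f - g|)
          ≤ ν (f + g) + ν ((-1 : ℝ) • |f - g|) :=
            hadd _ (Gen.add hf hg) _ (Gen.smul _ (gen_abs (gen_sub hf hg)))
      _ ≤ (ν f + ν g) + (ν f + ν g) := add_le_add (hadd _ hf _ hg) habs
    have := hMf ν ⟨hsmul, hadd, hmono⟩ hδ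
    have := hMg ν ⟨hsmul, hadd, hmono⟩ hδ
    rw [abs_of_nonneg (by norm_num : (0:ℝ) ≤ 2⁻¹)]
    linarith

end Aux

/-- the supremum defining the FBL(A) norm is finite for each `f ∈ L`. -/
theorem statement1 {A : Type*} (f : (A → ℝ) → ℝ)
    (hf : Gen (Set.range (delta (A := A))) f) :
    BddAbove ((fun ν => ν f) ''
      {ν : ((A → ℝ) → ℝ) → ℝ |
        IsLatticeSeminormOn {g | Gen (Set.range (delta (A := A))) g} ν ∧
        ∀ a : A, ν (delta a) ≤ 1}) := by
  obtain ⟨M, hM⟩ := key hf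
  exact ⟨M, by rintro _ ⟨ν, ⟨hν, hδ⟩, rfl⟩; exact hM ν hν hδ⟩
end
end

section
/- Let A be a set, L the sublattice of ℝ^(ℝ^A) generated by {δ_a : a ∈ A}, and 𝒩 the set of all lattice seminorms ν on L with ν(δ_a) ≤ 1 for all a ∈ A. Then f ↦ sup_{ν ∈ 𝒩} ν(f) is a lattice norm on L: it is a norm and satisfies ‖f‖ ≤ ‖g‖ whenever |f| ≤ |g|. -/
noncomputable section

namespace Statement2Aux

variable {A : Type*}

/-- The set of lattice seminorms with `ν (δ a) ≤ 1`. -/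
def NN (A : Type*) : Set (((A → ℝ) → ℝ) → ℝ) :=
  {ν | IsLatticeSeminormOn {g | Gen (Set.range (delta (A := A))) g} ν ∧
    ∀ a : A, ν (delta a) ≤ 1}

lemma abs_max_le (a b : ℝ) : |max a b| ≤ |a| + |b| := by
  rcases le_total a b with h | h
  · rw [max_eq_right h]; exact le_add_of_nonneg_left (abs_nonneg a)
  · rw [max_eq_left h]; exact le_add_of_nonneg_right (abs_nonneg b)

lemma abs_min_le (a b : ℝ) : |min a b| ≤ |a| + |b| := by
  rcases le_total a b with h | h
  · rw [min_eq_left h]; exact le_add_of_nonneg_right (abs_nonneg b)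
  · rw [min_eq_right h]; exact le_add_of_nonneg_left (abs_nonneg a)

lemma gen_abs {X : Type*} [AddCommGroup X] [Lattice X] [Module ℝ X] {S : Set X} {f : X}
    (h : Gen S f) : Gen S |f| := by
  have h2 := Gen.sup h (Gen.smul (-1) h)
  have h3 : f ⊔ (-1 : ℝ) • f = |f| := by
    rw [neg_smul, one_smul]; exact rfl
  rwa [h3] at h2

lemma zero_mem_NN : (0 : ((A → ℝ) → ℝ) → ℝ) ∈ NN A := by
  refine ⟨⟨?_, ?_, ?_⟩, ?_⟩ <;> intros <;> simp

lemma eval_mem_NN (z : A → ℝ) (hz : ∀ a, |z a| ≤ 1) :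
    (fun g : (A → ℝ) → ℝ => |g z|) ∈ NN A := by
  refine ⟨⟨?_, ?_, ?_⟩, ?_⟩
  · intro c f _; simp [Pi.smul_apply, abs_mul]
  · intro f _ g _; simpa [Pi.add_apply] using abs_add_le (f z) (g z)
  · intro f _ g _ hfg
    have h := hfg z
    simpa [Pi.abs_apply] using h
  · intro a; simpa [delta] using hz a

lemma gen_posHom {f : (A → ℝ) → ℝ} (h : Gen (Set.range (delta (A := A))) f) :
    ∀ t : ℝ, 0 ≤ t → ∀ x : A → ℝ, f (t • x) = t * f x := by
  induction h with
  | of hf =>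
    obtain ⟨a, rfl⟩ := hf
    intro t ht x; simp [delta]
  | add hf hg ihf ihg =>
    intro t ht x
    simp only [Pi.add_apply, ihf t ht x, ihg t ht x]; ring
  | smul c hf ih =>
    intro t ht x
    simp only [Pi.smul_apply, smul_eq_mul, ih t ht x]; ring
  | sup hf hg ihf ihg =>
    intro t ht x
    simp only [Pi.sup_apply, ihf t ht x, ihg t ht x]
    exact (mul_max_of_nonneg _ _ ht).symm
  | inf hf hg ihf ihg =>
    intro t ht x
    simp only [Pi.inf_apply, ihf t ht x, ihg t ht x]
    exact (mul_min_of_nonneg _ _ ht).symm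

lemma gen_finDep {f : (A → ℝ) → ℝ} (h : Gen (Set.range (delta (A := A))) f) :
    ∃ s : Finset A, ∀ x y : A → ℝ, (∀ a ∈ s, x a = y a) → f x = f y := by
  classical
  induction h with
  | of hf =>
    obtain ⟨a, rfl⟩ := hf
    exact ⟨{a}, fun x y h => h a (by simp)⟩
  | add hf hg ihf ihg =>
    obtain ⟨s, hs⟩ := ihf; obtain ⟨t, ht⟩ := ihg
    refine ⟨s ∪ t, fun x y h => ?_⟩
    simp only [Pi.add_apply,
      hs x y fun a ha => h a (Finset.mem_union_left _ ha),
      ht x y fun a ha => h a (Finset.mem_union_right _ ha)]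
  | smul c hf ih =>
    obtain ⟨s, hs⟩ := ih
    exact ⟨s, fun x y h => by simp only [Pi.smul_apply, hs x y h]⟩
  | sup hf hg ihf ihg =>
    obtain ⟨s, hs⟩ := ihf; obtain ⟨t, ht⟩ := ihg
    refine ⟨s ∪ t, fun x y h => ?_⟩
    simp only [Pi.sup_apply,
      hs x y fun a ha => h a (Finset.mem_union_left _ ha),
      ht x y fun a ha => h a (Finset.mem_union_right _ ha)]
  | inf hf hg ihf ihg =>
    obtain ⟨s, hs⟩ := ihf; obtain ⟨t, ht⟩ := ihg
    refine ⟨s ∪ t, fun x y h => ?_⟩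
    simp only [Pi.inf_apply,
      hs x y fun a ha => h a (Finset.mem_union_left _ ha),
      ht x y fun a ha => h a (Finset.mem_union_right _ ha)]

lemma gen_bdd {f : (A → ℝ) → ℝ} (h : Gen (Set.range (delta (A := A))) f) :
    ∃ M : ℝ, ∀ ν ∈ NN A, ν f ≤ M := by
  induction h with
  | of hf =>
    refine ⟨1, fun ν hν => ?_⟩
    obtain ⟨a, rfl⟩ := hf
    exact hν.2 a
  | add hf hg ihf ihg =>
    obtain ⟨M1, h1⟩ := ihf; obtain ⟨M2, h2⟩ := ihg
    exact ⟨M1 + M2, fun ν hν =>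
      le_trans (hν.1.2.1 _ hf _ hg) (add_le_add (h1 ν hν) (h2 ν hν))⟩
  | smul c hf ih =>
    obtain ⟨M, h1⟩ := ih
    refine ⟨|c| * M, fun ν hν => ?_⟩
    rw [hν.1.1 c _ hf]
    exact mul_le_mul_of_nonneg_left (h1 ν hν) (abs_nonneg c)
  | @sup f g hf hg ihf ihg =>
    obtain ⟨M1, h1⟩ := ihf; obtain ⟨M2, h2⟩ := ihg
    refine ⟨M1 + M2, fun ν hν => ?_⟩
    have haf := gen_abs hf
    have hag := gen_abs hg
    have key : |f ⊔ g| ≤ |(|f| + |g|)| := by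
      rw [abs_of_nonneg (add_nonneg (abs_nonneg f) (abs_nonneg g))]
      intro x
      simpa [Pi.sup_apply] using abs_max_le (f x) (g x)
    have h3 := hν.1.2.2 _ (Gen.sup hf hg) _ (Gen.add haf hag) key
    have h4 := hν.1.2.1 _ haf _ hag
    have h5 : ν |f| ≤ ν f := hν.1.2.2 _ haf _ hf (by rw [abs_abs])
    have h6 : ν |g| ≤ ν g := hν.1.2.2 _ hag _ hg (by rw [abs_abs])
    calc ν (f ⊔ g) ≤ ν |f| + ν |g| := le_trans h3 h4
      _ ≤ M1 + M2 := add_le_add (le_trans h5 (h1 ν hν)) (le_trans h6 (h2 ν hν))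
  | @inf f g hf hg ihf ihg =>
    obtain ⟨M1, h1⟩ := ihf; obtain ⟨M2, h2⟩ := ihg
    refine ⟨M1 + M2, fun ν hν => ?_⟩
    have haf := gen_abs hf
    have hag := gen_abs hg
    have key : |f ⊓ g| ≤ |(|f| + |g|)| := by
      rw [abs_of_nonneg (add_nonneg (abs_nonneg f) (abs_nonneg g))]
      intro x
      simpa [Pi.inf_apply] using abs_min_le (f x) (g x)
    have h3 := hν.1.2.2 _ (Gen.inf hf hg) _ (Gen.add haf hag) key
    have h4 := hν.1.2.1 _ haf _ hag
    have h5 : ν |f| ≤ ν f := hν.1.2.2 _ haf _ hf (by rw [abs_abs])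
    have h6 : ν |g| ≤ ν g := hν.1.2.2 _ hag _ hg (by rw [abs_abs])
    calc ν (f ⊓ g) ≤ ν |f| + ν |g| := le_trans h3 h4
      _ ≤ M1 + M2 := add_le_add (le_trans h5 (h1 ν hν)) (le_trans h6 (h2 ν hν))

end Statement2Aux

open Statement2Aux in
/-- `f ↦ sup_{ν ∈ 𝒩} ν f` is a lattice norm on `L`. -/
theorem statement2 {A : Type*} :
    letI L : Set ((A → ℝ) → ℝ) := {g | Gen (Set.range (delta (A := A))) g}
    letI N : Set (((A → ℝ) → ℝ) → ℝ) :=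
      {ν | IsLatticeSeminormOn L ν ∧ ∀ a : A, ν (delta a) ≤ 1}
    letI nrm : ((A → ℝ) → ℝ) → ℝ := fun f => sSup ((fun ν => ν f) '' N)
    IsLatticeSeminormOn L nrm ∧ ∀ f ∈ L, nrm f = 0 → f = 0 := by
  classical
  show IsLatticeSeminormOn {g | Gen (Set.range (delta (A := A))) g}
      (fun f => sSup ((fun ν => ν f) '' NN A)) ∧
    ∀ f ∈ {g | Gen (Set.range (delta (A := A))) g},
      sSup ((fun ν => ν f) '' NN A) = 0 → f = 0
  have hne : ∀ f : (A → ℝ) → ℝ, ((fun ν => ν f) '' NN A).Nonempty :=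
    fun f => ⟨0, 0, zero_mem_NN, rfl⟩
  have hbdd : ∀ f : (A → ℝ) → ℝ, Gen (Set.range (delta (A := A))) f →
      BddAbove ((fun ν => ν f) '' NN A) := by
    intro f hf
    obtain ⟨M, hM⟩ := gen_bdd hf
    exact ⟨M, by rintro y ⟨ν, hν, rfl⟩; exact hM ν hν⟩
  have hle : ∀ ν ∈ NN A, ∀ f : (A → ℝ) → ℝ, Gen (Set.range (delta (A := A))) f →
      ν f ≤ sSup ((fun ν => ν f) '' NN A) :=
    fun ν hν f hf => le_csSup (hbdd f hf) ⟨ν, hν, rfl⟩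
  have hnonneg : ∀ f : (A → ℝ) → ℝ, Gen (Set.range (delta (A := A))) f →
      0 ≤ sSup ((fun ν => ν f) '' NN A) :=
    fun f hf => hle 0 zero_mem_NN f hf
  refine ⟨⟨?_, ?_, ?_⟩, ?_⟩
  · -- homogeneity
    intro c f hf
    rcases eq_or_ne c 0 with rfl | hc
    · simp only [abs_zero, zero_mul]
      apply le_antisymm
      · apply csSup_le (hne _)
        rintro y ⟨ν, hν, rfl⟩
        dsimp only
        rw [hν.1.1 0 f hf]; simp
      · exact hnonneg _ (Gen.smul 0 hf)
    · apply le_antisymm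
      · apply csSup_le (hne _)
        rintro y ⟨ν, hν, rfl⟩
        dsimp only
        rw [hν.1.1 c f hf]
        exact mul_le_mul_of_nonneg_left (hle ν hν f hf) (abs_nonneg c)
      · have key : sSup ((fun ν => ν f) '' NN A) ≤
            |c|⁻¹ * sSup ((fun ν => ν (c • f)) '' NN A) := by
          apply csSup_le (hne _)
          rintro y ⟨ν, hν, rfl⟩
          dsimp only
          have h1 : ν f = |c|⁻¹ * ν (c • f) := by
            rw [hν.1.1 c f hf, ← mul_assoc, inv_mul_cancel₀ (abs_ne_zero.mpr hc), one_mul]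
          rw [h1]
          exact mul_le_mul_of_nonneg_left (hle ν hν _ (Gen.smul c hf))
            (inv_nonneg.mpr (abs_nonneg c))
        calc |c| * sSup ((fun ν => ν f) '' NN A)
            ≤ |c| * (|c|⁻¹ * sSup ((fun ν => ν (c • f)) '' NN A)) :=
              mul_le_mul_of_nonneg_left key (abs_nonneg c)
          _ = sSup ((fun ν => ν (c • f)) '' NN A) := by
              rw [← mul_assoc, mul_inv_cancel₀ (abs_ne_zero.mpr hc), one_mul]
  · -- triangle inequality
    intro f hf g hg
    apply csSup_le (hne _)
    rintro y ⟨ν, hν, rfl⟩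
    dsimp only
    exact le_trans (hν.1.2.1 f hf g hg)
      (add_le_add (hle ν hν f hf) (hle ν hν g hg))
  · -- monotonicity
    intro f hf g hg hfg
    apply csSup_le (hne _)
    rintro y ⟨ν, hν, rfl⟩
    dsimp only
    exact le_trans (hν.1.2.2 f hf g hg hfg) (hle ν hν g hg)
  · -- definiteness
    intro f hf h0
    by_contra hne'
    obtain ⟨x, hx⟩ := Function.ne_iff.mp hne'
    obtain ⟨s, hs⟩ := gen_finDep hf
    set y : A → ℝ := fun a => if a ∈ s then x a else 0 with hy_def
    have hyx : f y = f x := hs y x (fun a ha => by simp [hy_def, ha])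
    set M : ℝ := ∑ a ∈ s, |x a| with hM_def
    have hM0 : 0 ≤ M := Finset.sum_nonneg fun _ _ => abs_nonneg _
    have hy : ∀ a, |y a| ≤ M := by
      intro a
      by_cases ha : a ∈ s
      · simp only [hy_def, ha, if_true]
        exact Finset.single_le_sum (fun i _ => abs_nonneg (x i)) ha
      · simp only [hy_def, ha, if_false, abs_zero]; exact hM0
    set c : ℝ := (M + 1)⁻¹ with hc_def
    have hc : 0 < c := by positivity
    have hz : ∀ a, |(c • y) a| ≤ 1 := by
      intro a
      rw [Pi.smul_apply, smul_eq_mul, abs_mul, abs_of_pos hc]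
      calc c * |y a| ≤ c * (M + 1) :=
            mul_le_mul_of_nonneg_left (le_trans (hy a) (by linarith)) hc.le
        _ = 1 := inv_mul_cancel₀ (by positivity)
    have hmem := eval_mem_NN (c • y) hz
    have h1 : |f (c • y)| ≤ sSup ((fun ν => ν f) '' NN A) := hle _ hmem f hf
    rw [h0] at h1
    have h2 : f (c • y) = c * f y := gen_posHom hf c hc.le y
    rw [h2, hyx, abs_mul, abs_of_pos hc] at h1
    have h3 : 0 < c * |f x| := mul_pos hc (abs_pos.mpr hx)
    linarith
end
end

section
/- Let A be a set, L the sublattice of ℝ^(ℝ^A) generated by {δ_a : a ∈ A}, and ‖f‖ = sup{ν(f) : ν a lattice seminorm on L with ν(δ_a) ≤ 1 for all a ∈ A}. Then ‖δ_a‖ = 1 for every a ∈ A (assuming A is nonempty, so that δ_a ≠ 0 can be witnessed). -/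
noncomputable section

/-- `‖δ_a‖ = 1` for every `a ∈ A`. -/
theorem statement3 {A : Type*} (a : A) :
    letI L : Set ((A → ℝ) → ℝ) := {g | Gen (Set.range (delta (A := A))) g}
    letI N : Set (((A → ℝ) → ℝ) → ℝ) :=
      {ν | IsLatticeSeminormOn L ν ∧ ∀ b : A, ν (delta b) ≤ 1}
    sSup ((fun ν => ν (delta a)) '' N) = 1 := by
  set ν₀ : (((A → ℝ) → ℝ) → ℝ) := fun f => |f (fun _ => 1)| with hν₀
  have hmem : IsLatticeSeminormOn {g | Gen (Set.range (delta (A:=A))) g} ν₀ ∧ ∀ b : A, ν₀ (delta b) ≤ 1 := by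
    refine ⟨⟨?_, ?_, ?_⟩, ?_⟩
    · intro c f _; simp [hν₀, abs_mul]
    · intro f _ g _; simpa [hν₀] using abs_add_le (f fun _ => 1) (g fun _ => 1)
    · intro f _ g _ h
      have := h (fun _ => 1)
      simpa [hν₀, Pi.abs_apply] using this
    · intro b; simp [hν₀, delta]
  have h1 : (1 : ℝ) ∈ (fun ν => ν (delta a)) '' {ν | IsLatticeSeminormOn {g | Gen (Set.range (delta (A:=A))) g} ν ∧ ∀ b : A, ν (delta b) ≤ 1} := by
    exact ⟨ν₀, hmem, by simp [hν₀, delta]⟩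
  apply le_antisymm
  · apply csSup_le ⟨1, h1⟩
    rintro x ⟨ν, hν, rfl⟩
    exact hν.2 a
  · apply le_csSup ⟨1, ?_⟩ h1
    rintro x ⟨ν, hν, rfl⟩
    exact hν.2 a
end
end

section
/- Let E be a real normed space and L the sublattice of ℝ^(E*) generated by {x̂ : x ∈ E}. Let ℳ be the set of all lattice seminorms ν on L with ν(x̂) ≤ ‖x‖ for all x ∈ E. Then for every f ∈ L, the quantity ⦀f⦀ := sup_{ν ∈ ℳ} ν(f) is finite. -/
noncomputable section

/-- The evaluation `x̂ ∈ ℝ^{E*}`, `x̂ (x*) = x*(x)`. -/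
def hat {E : Type*} [NormedAddCommGroup E] [NormedSpace ℝ E] (x : E) :
    (E →L[ℝ] ℝ) → ℝ := fun φ => φ x

/-- The sublattice generated by `S` is closed under `|·|`. -/
lemma gen_abs_s7 {X : Type*} [AddCommGroup X] [Lattice X] [Module ℝ X] {S : Set X} {f : X}
    (hf : Gen S f) : Gen S |f| := by
  have h : |f| = f ⊔ (-1 : ℝ) • f := by rw [neg_one_smul]; rfl
  rw [h]; exact Gen.sup hf (Gen.smul (-1) hf)

/-- A lattice seminorm satisfies `ν |f| = ν f`. -/
lemma nu_abs {E : Type*} [NormedAddCommGroup E] [NormedSpace ℝ E]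
    {ν : ((E →L[ℝ] ℝ) → ℝ) → ℝ}
    (hν : IsLatticeSeminormOn {g | Gen (Set.range (hat (E := E))) g} ν)
    {f : (E →L[ℝ] ℝ) → ℝ} (hf : Gen (Set.range (hat (E := E))) f) :
    ν |f| = ν f :=
  le_antisymm (hν.2.2 _ (gen_abs_s7 hf) _ hf (by rw [abs_abs]))
    (hν.2.2 _ hf _ (gen_abs_s7 hf) (by rw [abs_abs]))

lemma abs_max_le_real (a b : ℝ) : |max a b| ≤ |a| + |b| := by
  rcases le_total a b with h | h
  · rw [max_eq_right h]; linarith [abs_nonneg a]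
  · rw [max_eq_left h]; linarith [abs_nonneg b]

lemma abs_min_le_real (a b : ℝ) : |min a b| ≤ |a| + |b| := by
  rcases le_total a b with h | h
  · rw [min_eq_left h]; linarith [abs_nonneg b]
  · rw [min_eq_right h]; linarith [abs_nonneg a]

lemma sup_dom {Y : Type*} (f g : Y → ℝ) : |f ⊔ g| ≤ |(|f| + |g|)| := by
  refine Pi.le_def.mpr fun x => ?_
  simp only [Pi.abs_apply, Pi.add_apply, Pi.sup_apply]
  conv_rhs => rw [abs_of_nonneg (add_nonneg (abs_nonneg _) (abs_nonneg _))]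
  exact abs_max_le_real _ _

lemma inf_dom {Y : Type*} (f g : Y → ℝ) : |f ⊓ g| ≤ |(|f| + |g|)| := by
  refine Pi.le_def.mpr fun x => ?_
  simp only [Pi.abs_apply, Pi.add_apply, Pi.inf_apply]
  conv_rhs => rw [abs_of_nonneg (add_nonneg (abs_nonneg _) (abs_nonneg _))]
  exact abs_min_le_real _ _

/-- the supremum defining the FBL[E] norm is finite for each `f ∈ L`. -/
theorem statement7 {E : Type*} [NormedAddCommGroup E] [NormedSpace ℝ E]
    (f : (E →L[ℝ] ℝ) → ℝ) (hf : Gen (Set.range (hat (E := E))) f) :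
    BddAbove ((fun ν => ν f) ''
      {ν : ((E →L[ℝ] ℝ) → ℝ) → ℝ |
        IsLatticeSeminormOn {g | Gen (Set.range (hat (E := E))) g} ν ∧
        ∀ x : E, ν (hat x) ≤ ‖x‖}) := by
  suffices h : ∃ M : ℝ, ∀ ν : ((E →L[ℝ] ℝ) → ℝ) → ℝ,
      IsLatticeSeminormOn {g | Gen (Set.range (hat (E := E))) g} ν →
      (∀ x : E, ν (hat x) ≤ ‖x‖) → ν f ≤ M by
    obtain ⟨M, hM⟩ := h
    exact ⟨M, by rintro y ⟨ν, ⟨h1, h2⟩, rfl⟩; exact hM ν h1 h2⟩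
  induction hf with
  | of h =>
    obtain ⟨x, rfl⟩ := h
    exact ⟨‖x‖, fun ν _ h2 => h2 x⟩
  | @add p q hp hq ihp ihq =>
    obtain ⟨Mp, hMp⟩ := ihp; obtain ⟨Mq, hMq⟩ := ihq
    exact ⟨Mp + Mq, fun ν h1 h2 =>
      (h1.2.1 _ hp _ hq).trans (add_le_add (hMp ν h1 h2) (hMq ν h1 h2))⟩
  | @smul c p hp ih =>
    obtain ⟨M, hM⟩ := ih
    refine ⟨|c| * max M 0, fun ν h1 h2 => ?_⟩
    rw [h1.1 c _ hp]
    exact mul_le_mul_of_nonneg_left ((hM ν h1 h2).trans (le_max_left _ _)) (abs_nonneg c)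
  | @sup p q hp hq ihp ihq =>
    obtain ⟨Mp, hMp⟩ := ihp; obtain ⟨Mq, hMq⟩ := ihq
    refine ⟨Mp + Mq, fun ν h1 h2 => ?_⟩
    calc ν (p ⊔ q) ≤ ν (|p| + |q|) :=
          h1.2.2 _ (Gen.sup hp hq) _ (Gen.add (gen_abs_s7 hp) (gen_abs_s7 hq)) (sup_dom p q)
      _ ≤ ν |p| + ν |q| := h1.2.1 _ (gen_abs_s7 hp) _ (gen_abs_s7 hq)
      _ = ν p + ν q := by rw [nu_abs h1 hp, nu_abs h1 hq]
      _ ≤ Mp + Mq := add_le_add (hMp ν h1 h2) (hMq ν h1 h2)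
  | @inf p q hp hq ihp ihq =>
    obtain ⟨Mp, hMp⟩ := ihp; obtain ⟨Mq, hMq⟩ := ihq
    refine ⟨Mp + Mq, fun ν h1 h2 => ?_⟩
    calc ν (p ⊓ q) ≤ ν (|p| + |q|) :=
          h1.2.2 _ (Gen.inf hp hq) _ (Gen.add (gen_abs_s7 hp) (gen_abs_s7 hq)) (inf_dom p q)
      _ ≤ ν |p| + ν |q| := h1.2.1 _ (gen_abs_s7 hp) _ (gen_abs_s7 hq)
      _ = ν p + ν q := by rw [nu_abs h1 hp, nu_abs h1 hq]
      _ ≤ Mp + Mq := add_le_add (hMp ν h1 h2) (hMq ν h1 h2)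
end
end

section
/- Let E be a real normed space, L the sublattice of ℝ^(E*) generated by {x̂ : x ∈ E}, and ⦀f⦀ = sup{ν(f) : ν a lattice seminorm on L with ν(x̂) ≤ ‖x‖ for all x ∈ E}. Then ⦀·⦀ is a lattice norm on L: a norm satisfying ⦀f⦀ ≤ ⦀g⦀ whenever |f| ≤ |g|. -/
noncomputable section

namespace Statement8Aux

variable {E : Type*} [NormedAddCommGroup E] [NormedSpace ℝ E]

/-- The sublattice `L`. -/
def Lset (E : Type*) [NormedAddCommGroup E] [NormedSpace ℝ E] : Set ((E →L[ℝ] ℝ) → ℝ) :=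
  {g | Gen (Set.range (hat (E := E))) g}

/-- The set of admissible lattice seminorms. -/
def Mset (E : Type*) [NormedAddCommGroup E] [NormedSpace ℝ E] :
    Set (((E →L[ℝ] ℝ) → ℝ) → ℝ) :=
  {ν | IsLatticeSeminormOn (Lset E) ν ∧ ∀ x : E, ν (hat x) ≤ ‖x‖}

lemma mem_Lset {f : (E →L[ℝ] ℝ) → ℝ} (hf : Gen (Set.range (hat (E := E))) f) :
    f ∈ Lset E := hf

lemma zero_mem_M : (fun _ => (0:ℝ)) ∈ Mset E := by
  refine ⟨⟨fun c f _ => by simp, fun f _ g _ => by simp, fun f _ g _ _ => le_refl _⟩,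
    fun x => norm_nonneg x⟩

lemma eval_mem_M (φ : E →L[ℝ] ℝ) (hφ : ‖φ‖ ≤ 1) : (fun f => |f φ|) ∈ Mset E := by
  refine ⟨⟨fun c f _ => by simp [abs_mul], fun f _ g _ => by simpa using abs_add_le (f φ) (g φ),
    fun f _ g _ h => ?_⟩, fun x => ?_⟩
  · have := h φ
    simpa [Pi.abs_apply] using this
  · calc |(hat x) φ| = ‖φ x‖ := rfl
      _ ≤ ‖φ‖ * ‖x‖ := φ.le_opNorm x
      _ ≤ 1 * ‖x‖ := mul_le_mul_of_nonneg_right hφ (norm_nonneg x)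
      _ = ‖x‖ := one_mul _

lemma abs_gen {f : (E →L[ℝ] ℝ) → ℝ} (hf : Gen (Set.range (hat (E := E))) f) :
    Gen (Set.range (hat (E := E))) |f| := by
  have : |f| = f ⊔ ((-1 : ℝ) • f) := by
    rw [neg_one_smul]; rfl
  rw [this]
  exact Gen.sup hf (Gen.smul (-1) hf)

lemma abs_sup_le' (f g : (E →L[ℝ] ℝ) → ℝ) : |f ⊔ g| ≤ |(|f| + |g|)| := by
  intro φ
  simp only [Pi.abs_apply, Pi.sup_apply, Pi.add_apply]
  rw [abs_of_nonneg (add_nonneg (abs_nonneg (f φ)) (abs_nonneg (g φ)))]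
  rcases le_total (f φ) (g φ) with h | h
  · rw [sup_eq_right.2 h]; linarith [abs_nonneg (f φ)]
  · rw [sup_eq_left.2 h]; linarith [abs_nonneg (g φ)]

lemma abs_inf_le' (f g : (E →L[ℝ] ℝ) → ℝ) : |f ⊓ g| ≤ |(|f| + |g|)| := by
  intro φ
  simp only [Pi.abs_apply, Pi.inf_apply, Pi.add_apply]
  rw [abs_of_nonneg (add_nonneg (abs_nonneg (f φ)) (abs_nonneg (g φ)))]
  rcases le_total (f φ) (g φ) with h | h
  · rw [inf_eq_left.2 h]; linarith [abs_nonneg (g φ)]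
  · rw [inf_eq_right.2 h]; linarith [abs_nonneg (f φ)]

lemma nu_abs_le {ν : ((E →L[ℝ] ℝ) → ℝ) → ℝ} (hν : ν ∈ Mset E)
    {f : (E →L[ℝ] ℝ) → ℝ} (hf : Gen (Set.range (hat (E := E))) f) : ν |f| ≤ ν f :=
  hν.1.2.2 _ (mem_Lset (abs_gen hf)) _ (mem_Lset hf) (by rw [abs_abs])

/-- Every element of `L` is uniformly bounded over all admissible seminorms. -/
lemma bound {f : (E →L[ℝ] ℝ) → ℝ} (hf : Gen (Set.range (hat (E := E))) f) :
    ∃ B : ℝ, ∀ ν ∈ Mset E, ν f ≤ B := by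
  induction hf with
  | of h =>
    obtain ⟨x, rfl⟩ := h
    exact ⟨‖x‖, fun ν hν => hν.2 x⟩
  | @add f g hf hg ihf ihg =>
    obtain ⟨Bf, hBf⟩ := ihf
    obtain ⟨Bg, hBg⟩ := ihg
    refine ⟨Bf + Bg, fun ν hν => ?_⟩
    exact le_trans (hν.1.2.1 _ (mem_Lset hf) _ (mem_Lset hg))
      (add_le_add (hBf ν hν) (hBg ν hν))
  | @smul c f hf ih =>
    obtain ⟨Bf, hBf⟩ := ih
    refine ⟨|c| * max Bf 0, fun ν hν => ?_⟩
    rw [hν.1.1 c _ (mem_Lset hf)]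
    exact mul_le_mul_of_nonneg_left (le_trans (hBf ν hν) (le_max_left _ _)) (abs_nonneg c)
  | @sup f g hf hg ihf ihg =>
    obtain ⟨Bf, hBf⟩ := ihf
    obtain ⟨Bg, hBg⟩ := ihg
    refine ⟨Bf + Bg, fun ν hν => ?_⟩
    have h1 : ν (f ⊔ g) ≤ ν (|f| + |g|) :=
      hν.1.2.2 _ (mem_Lset (Gen.sup hf hg)) _
        (mem_Lset (Gen.add (abs_gen hf) (abs_gen hg))) (abs_sup_le' f g)
    have h2 : ν (|f| + |g|) ≤ ν |f| + ν |g| :=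
      hν.1.2.1 _ (mem_Lset (abs_gen hf)) _ (mem_Lset (abs_gen hg))
    calc ν (f ⊔ g) ≤ ν |f| + ν |g| := le_trans h1 h2
      _ ≤ ν f + ν g := add_le_add (nu_abs_le hν hf) (nu_abs_le hν hg)
      _ ≤ Bf + Bg := add_le_add (hBf ν hν) (hBg ν hν)
  | @inf f g hf hg ihf ihg =>
    obtain ⟨Bf, hBf⟩ := ihf
    obtain ⟨Bg, hBg⟩ := ihg
    refine ⟨Bf + Bg, fun ν hν => ?_⟩
    have h1 : ν (f ⊓ g) ≤ ν (|f| + |g|) :=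
      hν.1.2.2 _ (mem_Lset (Gen.inf hf hg)) _
        (mem_Lset (Gen.add (abs_gen hf) (abs_gen hg))) (abs_inf_le' f g)
    have h2 : ν (|f| + |g|) ≤ ν |f| + ν |g| :=
      hν.1.2.1 _ (mem_Lset (abs_gen hf)) _ (mem_Lset (abs_gen hg))
    calc ν (f ⊓ g) ≤ ν |f| + ν |g| := le_trans h1 h2
      _ ≤ ν f + ν g := add_le_add (nu_abs_le hν hf) (nu_abs_le hν hg)
      _ ≤ Bf + Bg := add_le_add (hBf ν hν) (hBg ν hν)

lemma bdd {f : (E →L[ℝ] ℝ) → ℝ} (hf : Gen (Set.range (hat (E := E))) f) :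
    BddAbove ((fun ν => ν f) '' Mset E) := by
  obtain ⟨B, hB⟩ := bound hf
  exact ⟨B, by rintro _ ⟨ν, hν, rfl⟩; exact hB ν hν⟩

lemma nonemptyIm (f : (E →L[ℝ] ℝ) → ℝ) : ((fun ν => ν f) '' Mset E).Nonempty :=
  ⟨0, ⟨_, zero_mem_M, rfl⟩⟩

/-- Every element of `L` is positively homogeneous as a function on `E*`. -/
lemma pos_homog {f : (E →L[ℝ] ℝ) → ℝ} (hf : Gen (Set.range (hat (E := E))) f) :
    ∀ c : ℝ, 0 ≤ c → ∀ φ : E →L[ℝ] ℝ, f (c • φ) = c * f φ := by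
  induction hf with
  | of h =>
    obtain ⟨x, rfl⟩ := h
    intro c hc φ
    simp [hat]
  | @add f g hf hg ihf ihg =>
    intro c hc φ
    simp only [Pi.add_apply, ihf c hc φ, ihg c hc φ]; ring
  | @smul a f hf ih =>
    intro c hc φ
    simp only [Pi.smul_apply, smul_eq_mul, ih c hc φ]; ring
  | @sup f g hf hg ihf ihg =>
    intro c hc φ
    simp only [Pi.sup_apply, ihf c hc φ, ihg c hc φ]
    exact (mul_max_of_nonneg _ _ hc).symm
  | @inf f g hf hg ihf ihg =>
    intro c hc φ
    simp only [Pi.inf_apply, ihf c hc φ, ihg c hc φ]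
    exact (mul_min_of_nonneg _ _ hc).symm

def nrm' (f : (E →L[ℝ] ℝ) → ℝ) : ℝ := sSup ((fun ν => ν f) '' Mset E)

lemma main1 : IsLatticeSeminormOn (Lset E) (nrm' (E := E)) := by
  refine ⟨?_, ?_, ?_⟩
  · -- homogeneity
    intro c f hf
    have hf' : Gen (Set.range (hat (E := E))) f := hf
    have hcf : Gen (Set.range (hat (E := E))) (c • f) := Gen.smul c hf'
    apply le_antisymm
    · apply csSup_le (nonemptyIm _)
      rintro _ ⟨ν, hν, rfl⟩
      show ν (c • f) ≤ |c| * nrm' f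
      rw [hν.1.1 c f hf]
      exact mul_le_mul_of_nonneg_left (le_csSup (bdd hf') ⟨ν, hν, rfl⟩) (abs_nonneg c)
    · rcases eq_or_ne c 0 with rfl | hc
      · simp only [abs_zero, zero_mul]
        have h0 : (fun ν : ((E →L[ℝ] ℝ) → ℝ) → ℝ => ν ((0:ℝ) • f)) (fun _ => 0) = 0 := rfl
        exact le_csSup (bdd hcf) ⟨_, zero_mem_M, h0⟩
      · have hc' : 0 < |c| := abs_pos.2 hc
        have key : nrm' f ≤ |c|⁻¹ * nrm' (c • f) := by
          apply csSup_le (nonemptyIm _)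
          rintro _ ⟨ν, hν, rfl⟩
          show ν f ≤ |c|⁻¹ * nrm' (c • f)
          have h1 : |c| * ν f ≤ nrm' (c • f) := by
            rw [← hν.1.1 c f hf]
            exact le_csSup (bdd hcf) ⟨ν, hν, rfl⟩
          calc ν f = |c|⁻¹ * (|c| * ν f) := by field_simp
            _ ≤ |c|⁻¹ * nrm' (c • f) := mul_le_mul_of_nonneg_left h1 (by positivity)
        calc |c| * nrm' f ≤ |c| * (|c|⁻¹ * nrm' (c • f)) :=
              mul_le_mul_of_nonneg_left key (abs_nonneg c)
          _ = nrm' (c • f) := by field_simp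
  · -- subadditivity
    intro f hf g hg
    apply csSup_le (nonemptyIm _)
    rintro _ ⟨ν, hν, rfl⟩
    exact le_trans (hν.1.2.1 f hf g hg)
      (add_le_add (le_csSup (bdd hf) ⟨ν, hν, rfl⟩) (le_csSup (bdd hg) ⟨ν, hν, rfl⟩))
  · -- monotonicity
    intro f hf g hg h
    apply csSup_le (nonemptyIm _)
    rintro _ ⟨ν, hν, rfl⟩
    exact le_trans (hν.1.2.2 f hf g hg h) (le_csSup (bdd hg) ⟨ν, hν, rfl⟩)

lemma main2 : ∀ f ∈ Lset E, nrm' f = 0 → f = 0 := by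
  intro f hf h0
  have hf' : Gen (Set.range (hat (E := E))) f := hf
  have small : ∀ φ : E →L[ℝ] ℝ, ‖φ‖ ≤ 1 → f φ = 0 := by
    intro φ hφ
    have h1 : |f φ| ≤ nrm' f := le_csSup (bdd hf') ⟨_, eval_mem_M φ hφ, rfl⟩
    rw [h0] at h1
    exact abs_eq_zero.1 (le_antisymm h1 (abs_nonneg _))
  funext φ
  rcases le_or_gt ‖φ‖ 1 with hφ | hφ
  · exact small φ hφ
  · have hφ0 : φ ≠ 0 := by
      intro h; rw [h] at hφ; norm_num at hφ
    have hn : (0:ℝ) < ‖φ‖ := norm_pos_iff.2 hφ0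
    set ψ : E →L[ℝ] ℝ := ‖φ‖⁻¹ • φ with hψ
    have hψn : ‖ψ‖ ≤ 1 := by
      have : ‖ψ‖ = ‖φ‖⁻¹ * ‖φ‖ := by
        rw [hψ, norm_smul ((‖φ‖)⁻¹) φ, Real.norm_eq_abs, abs_of_pos (inv_pos.2 hn)]
      rw [this, inv_mul_cancel₀ hn.ne']
    have hfφ : f φ = ‖φ‖ * f ψ := by
      have hsm : (‖φ‖ : ℝ) • ψ = φ := by
        rw [hψ, smul_smul, mul_inv_cancel₀ hn.ne', one_smul]
      calc f φ = f (‖φ‖ • ψ) := by rw [hsm]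
        _ = ‖φ‖ * f ψ := pos_homog hf' ‖φ‖ hn.le ψ
    rw [hfφ, small ψ hψn, mul_zero]
    rfl

end Statement8Aux

open Statement8Aux in
/-- `⦀f⦀ = sup_{ν ∈ ℳ} ν f` is a lattice norm on `L`. -/
theorem statement8 {E : Type*} [NormedAddCommGroup E] [NormedSpace ℝ E] :
    letI L : Set ((E →L[ℝ] ℝ) → ℝ) := {g | Gen (Set.range (hat (E := E))) g}
    letI M : Set (((E →L[ℝ] ℝ) → ℝ) → ℝ) :=
      {ν | IsLatticeSeminormOn L ν ∧ ∀ x : E, ν (hat x) ≤ ‖x‖}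
    letI nrm : ((E →L[ℝ] ℝ) → ℝ) → ℝ := fun f => sSup ((fun ν => ν f) '' M)
    IsLatticeSeminormOn L nrm ∧ ∀ f ∈ L, nrm f = 0 → f = 0 :=
  ⟨main1, main2⟩
end
end

section
/- Let E be a real normed space, L the sublattice of ℝ^(E*) generated by {x̂ : x ∈ E}, and ⦀f⦀ = sup{ν(f) : ν a lattice seminorm on L with ν(ŷ) ≤ ‖y‖ for all y ∈ E}. Then ⦀x̂⦀ = ‖x‖ for every x ∈ E; i.e., x ↦ x̂ is an isometric embedding of E into (L, ⦀·⦀). -/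
noncomputable section

/-- `⦀x̂⦀ = ‖x‖`, i.e. `x ↦ x̂` is an isometric embedding of `E` into `(L, ⦀·⦀)`. -/
theorem statement9 {E : Type*} [NormedAddCommGroup E] [NormedSpace ℝ E] (x : E) :
    letI L : Set ((E →L[ℝ] ℝ) → ℝ) := {g | Gen (Set.range (hat (E := E))) g}
    letI M : Set (((E →L[ℝ] ℝ) → ℝ) → ℝ) :=
      {ν | IsLatticeSeminormOn L ν ∧ ∀ y : E, ν (hat y) ≤ ‖y‖}
    sSup ((fun ν => ν (hat x)) '' M) = ‖x‖ := by
  set M : Set (((E →L[ℝ] ℝ) → ℝ) → ℝ) :=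
    {ν | IsLatticeSeminormOn {g | Gen (Set.range (hat (E := E))) g} ν ∧ ∀ y : E, ν (hat y) ≤ ‖y‖}
    with hM
  -- the norming functional
  obtain ⟨φ, hφ1, hφx⟩ := exists_dual_vector'' ℝ x
  set ν₀ : ((E →L[ℝ] ℝ) → ℝ) → ℝ := fun f => |f φ| with hν₀
  have hν₀M : ν₀ ∈ M := by
    refine ⟨⟨?_, ?_, ?_⟩, ?_⟩
    · intro c f _; simp [hν₀, abs_mul]
    · intro f _ g _; exact abs_add_le _ _
    · intro f _ g _ h
      have := h φ
      simpa using this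
    · intro y
      calc |φ y| = ‖φ y‖ := rfl
        _ ≤ ‖φ‖ * ‖y‖ := φ.le_opNorm y
        _ ≤ 1 * ‖y‖ := by gcongr
        _ = ‖y‖ := one_mul _
  have hbdd : ∀ r ∈ (fun ν => ν (hat x)) '' M, r ≤ ‖x‖ := by
    rintro r ⟨ν, hν, rfl⟩
    exact hν.2 x
  refine le_antisymm (Real.sSup_le hbdd (norm_nonneg x)) ?_
  have : ν₀ (hat x) = ‖x‖ := by
    simp [hν₀, hat, hφx, abs_of_nonneg (norm_nonneg x)]
  calc ‖x‖ = ν₀ (hat x) := this.symm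
    _ ≤ sSup ((fun ν => ν (hat x)) '' M) :=
      le_csSup ⟨‖x‖, hbdd⟩ (Set.mem_image_of_mem _ hν₀M)
end
end

section
/- Let E be a real normed space, Y a normed vector lattice, T : E → Y a bounded linear operator with ‖T‖ ≤ 1, and L the sublattice of ℝ^(E*) generated by {x̂ : x ∈ E}. Define T̂ : L → Y by sending F(x̂_1, …, x̂_n) to F(Tx_1, …, Tx_n) for any lattice-linear expression F. Then T̂ is well-defined (independent of the representation), is a lattice homomorphism, and extends T in the sense T̂(x̂) = Tx for all x ∈ E. -/
noncomputable section

/-- Lattice-linear expressions in `n` variables. -/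
inductive LatExpr (n : ℕ) where
  | var : Fin n → LatExpr n
  | smul : ℝ → LatExpr n → LatExpr n
  | add : LatExpr n → LatExpr n → LatExpr n
  | sup : LatExpr n → LatExpr n → LatExpr n
  | inf : LatExpr n → LatExpr n → LatExpr n

/-- Evaluation of a lattice-linear expression in a vector lattice. -/
noncomputable def LatExpr.eval {X : Type*} [AddCommGroup X] [Lattice X] [Module ℝ X]
    {n : ℕ} : LatExpr n → (Fin n → X) → X
  | var i, x => x i
  | smul c F, x => c • F.eval x
  | add F G, x => F.eval x + G.eval x
  | sup F G, x => F.eval x ⊔ G.eval x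
  | inf F G, x => F.eval x ⊓ G.eval x

set_option linter.unusedSectionVars false
set_option maxHeartbeats 1000000

noncomputable section
open Finset

variable {n : ℕ}

section VL
variable {X : Type*} [AddCommGroup X] [Lattice X] [Module ℝ X]

/-- dot product of a coefficient vector with a vector of lattice elements -/
def dotv (a : Fin n → ℝ) (x : Fin n → X) : X := ∑ i, a i • x i

lemma dotv_add (a b : Fin n → ℝ) (x : Fin n → X) :
    dotv (a + b) x = dotv a x + dotv b x := by
  simp [dotv, add_smul, Finset.sum_add_distrib]

lemma dotv_smul (c : ℝ) (a : Fin n → ℝ) (x : Fin n → X) :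
    dotv (c • a) x = c • dotv a x := by
  simp [dotv, Finset.smul_sum, smul_smul]

lemma dotv_zero (x : Fin n → X) : dotv 0 x = 0 := by simp [dotv]

lemma dotv_single (i : Fin n) (x : Fin n → X) : dotv (Pi.single i 1) x = x i := by
  simp [dotv, Pi.single_apply, ite_smul]

end VL

/-- half of a normal form: a nonempty finite set of coefficient vectors -/
structure NFHalf (n : ℕ) where
  s : Finset (Fin n → ℝ)
  ne : s.Nonempty

namespace NFHalf

variable {X : Type*} [AddCommGroup X] [Lattice X] [Module ℝ X]

def eval (h : NFHalf n) (x : Fin n → X) : X := h.s.sup' h.ne (fun a => dotv a x)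

def addH (h k : NFHalf n) : NFHalf n :=
  ⟨(h.s ×ˢ k.s).image (fun p => p.1 + p.2), (Finset.Nonempty.product h.ne k.ne).image _⟩

def unionH (h k : NFHalf n) : NFHalf n := ⟨h.s ∪ k.s, h.ne.inl⟩

def smulH (c : ℝ) (h : NFHalf n) : NFHalf n := ⟨h.s.image (c • ·), h.ne.image _⟩

variable [CovariantClass X X (· + ·) (· ≤ ·)] [PosSMulMono ℝ X]

lemma eval_unionH (h k : NFHalf n) (x : Fin n → X) :
    (h.unionH k).eval x = h.eval x ⊔ k.eval x := by
  classical
  simpa [unionH, eval] using Finset.sup'_union h.ne k.ne (fun a => dotv a x)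

lemma eval_addH (h k : NFHalf n) (x : Fin n → X) :
    (h.addH k).eval x = h.eval x + k.eval x := by
  classical
  simp only [eval, addH, Finset.sup'_image, Function.comp]
  apply le_antisymm
  · apply Finset.sup'_le
    rintro ⟨a, b⟩ hab
    rw [Finset.mem_product] at hab
    show dotv (a + b) x ≤ _
    rw [dotv_add]
    exact add_le_add (Finset.le_sup' (fun a => dotv a x) hab.1)
      (Finset.le_sup' (fun a => dotv a x) hab.2)
  · rw [← le_sub_iff_add_le]
    apply Finset.sup'_le
    intro a ha
    rw [le_sub_iff_add_le, ← le_sub_iff_add_le']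
    apply Finset.sup'_le
    intro b hb
    rw [le_sub_iff_add_le', ← dotv_add]
    have hm : (a, b) ∈ h.s ×ˢ k.s := Finset.mem_product.2 ⟨ha, hb⟩
    exact Finset.le_sup' (f := fun p : (Fin n → ℝ) × (Fin n → ℝ) => dotv (p.1 + p.2) x) hm

lemma eval_smulH {c : ℝ} (hc : 0 ≤ c) (h : NFHalf n) (x : Fin n → X) :
    (h.smulH c).eval x = c • h.eval x := by
  classical
  simp only [eval, smulH, Finset.sup'_image, Function.comp]
  apply le_antisymm
  · apply Finset.sup'_le
    intro a ha
    show dotv (c • a) x ≤ _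
    rw [dotv_smul]
    exact smul_le_smul_of_nonneg_left (Finset.le_sup' (fun a => dotv a x) ha) hc
  · rcases eq_or_lt_of_le hc with rfl | hc'
    · have : ∀ a ∈ h.s, (0:ℝ) • dotv a x ≤ h.s.sup' h.ne fun a => dotv ((0:ℝ) • a) x := by
        intro a ha
        rw [← dotv_smul]
        exact Finset.le_sup' (fun a => dotv ((0:ℝ) • a) x) ha
      obtain ⟨a0, ha0⟩ := h.ne
      calc (0:ℝ) • (h.s.sup' h.ne fun a => dotv a x) = (0:ℝ) • dotv a0 x := by simp
        _ ≤ _ := this a0 ha0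
    · have : h.eval x ≤ c⁻¹ • h.s.sup' h.ne fun a => dotv (c • a) x := by
        apply Finset.sup'_le
        intro a ha
        have h1 : c • dotv a x ≤ h.s.sup' h.ne fun a => dotv (c • a) x := by
          rw [← dotv_smul]; exact Finset.le_sup' (fun a => dotv (c • a) x) ha
        have := smul_le_smul_of_nonneg_left h1 (inv_nonneg.2 hc)
        rwa [smul_smul, inv_mul_cancel₀ hc'.ne', one_smul] at this
      have := smul_le_smul_of_nonneg_left this hc
      rwa [smul_smul, mul_inv_cancel₀ hc'.ne', one_smul] at this

end NFHalf


/-- a normal form: difference of two sups of linear functions -/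
structure NF (n : ℕ) where
  pos : NFHalf n
  neg : NFHalf n

def NF.eval {X : Type*} [AddCommGroup X] [Lattice X] [Module ℝ X]
    (N : NF n) (x : Fin n → X) : X := N.pos.eval x - N.neg.eval x

open Classical in
/-- the normal form of a lattice-linear expression -/
noncomputable def LatExpr.nf : LatExpr n → NF n
  | .var i => ⟨⟨{Pi.single i 1}, Finset.singleton_nonempty _⟩, ⟨{0}, Finset.singleton_nonempty _⟩⟩
  | .smul c F =>
      if 0 ≤ c then ⟨F.nf.pos.smulH c, F.nf.neg.smulH c⟩
      else ⟨F.nf.neg.smulH (-c), F.nf.pos.smulH (-c)⟩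
  | .add F G => ⟨F.nf.pos.addH G.nf.pos, F.nf.neg.addH G.nf.neg⟩
  | .sup F G => ⟨(F.nf.pos.addH G.nf.neg).unionH (G.nf.pos.addH F.nf.neg),
      F.nf.neg.addH G.nf.neg⟩
  | .inf F G => ⟨F.nf.pos.addH G.nf.pos,
      (F.nf.pos.addH G.nf.neg).unionH (G.nf.pos.addH F.nf.neg)⟩

section EvalNF
variable {X : Type*} [AddCommGroup X] [Lattice X] [Module ℝ X]
  [CovariantClass X X (· + ·) (· ≤ ·)] [PosSMulMono ℝ X]

lemma sup_eq_formula (u1 v1 u2 v2 : X) :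
    (u1 - v1) ⊔ (u2 - v2) = ((u1 + v2) ⊔ (u2 + v1)) - (v1 + v2) := by
  rw [sup_sub]
  congr 1 <;> abel

theorem LatExpr.eval_nf (F : LatExpr n) (x : Fin n → X) :
    F.eval x = F.nf.eval x := by
  induction F with
  | var i => simp [LatExpr.eval, LatExpr.nf, NF.eval, NFHalf.eval, dotv_single, dotv_zero]
  | smul c F ih =>
      rw [LatExpr.eval, ih, LatExpr.nf]
      rcases le_or_gt 0 c with hc | hc
      · rw [if_pos hc]
        simp only [NF.eval, NFHalf.eval_smulH hc, smul_sub]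
      · rw [if_neg (not_le.2 hc)]
        have hc' : (0:ℝ) ≤ -c := by linarith
        simp only [NF.eval, NFHalf.eval_smulH hc', neg_smul, smul_sub]
        abel
  | add F G ihF ihG =>
      rw [LatExpr.eval, ihF, ihG, LatExpr.nf]
      simp only [NF.eval, NFHalf.eval_addH]
      abel
  | sup F G ihF ihG =>
      rw [LatExpr.eval, ihF, ihG, LatExpr.nf]
      simp only [NF.eval, NFHalf.eval_addH, NFHalf.eval_unionH]
      rw [sup_eq_formula]
  | inf F G ihF ihG =>
      rw [LatExpr.eval, ihF, ihG, LatExpr.nf]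
      simp only [NF.eval, NFHalf.eval_addH, NFHalf.eval_unionH]
      have h1 := sup_eq_formula (F.nf.pos.eval x) (F.nf.neg.eval x)
        (G.nf.pos.eval x) (G.nf.neg.eval x)
      have h2 : (F.nf.pos.eval x - F.nf.neg.eval x) ⊓ (G.nf.pos.eval x - G.nf.neg.eval x)
          = (F.nf.pos.eval x - F.nf.neg.eval x) + (G.nf.pos.eval x - G.nf.neg.eval x)
            - ((F.nf.pos.eval x - F.nf.neg.eval x) ⊔ (G.nf.pos.eval x - G.nf.neg.eval x)) := by
        rw [eq_sub_iff_add_eq, inf_add_sup]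
      rw [h2, h1]
      abel
end EvalNF


section PosCone
variable {Y : Type*} [NormedAddCommGroup Y] [Lattice Y] [HasSolidNorm Y] [IsOrderedAddMonoid Y] [NormedSpace ℝ Y]

lemma pow2_nsmul_semiclosed {b : Y} (k : ℕ) (h : 0 ≤ (2 ^ k) • b) : 0 ≤ b := by
  induction k with
  | zero => simpa using h
  | succ k ih =>
      apply ih
      apply nsmul_two_semiclosed
      rwa [pow_succ, mul_comm, mul_smul] at h

lemma dyadic_smul_nonneg {a : Y} (ha : 0 ≤ a) (m k : ℕ) :
    0 ≤ ((m : ℝ) / 2 ^ k) • a := by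
  apply pow2_nsmul_semiclosed (b := ((m : ℝ) / 2 ^ k) • a) k
  have : (2 ^ k : ℕ) • (((m : ℝ) / 2 ^ k) • a) = (m : ℕ) • a := by
    rw [← Nat.cast_smul_eq_nsmul ℝ, ← Nat.cast_smul_eq_nsmul ℝ, smul_smul]
    congr 1
    push_cast
    field_simp
  rw [this]
  exact nsmul_nonneg ha m

lemma real_smul_nonneg {c : ℝ} (hc : 0 ≤ c) {a : Y} (ha : 0 ≤ a) : 0 ≤ c • a := by
  set q : ℕ → ℝ := fun k => (⌊c * 2 ^ k⌋₊ : ℝ) / 2 ^ k with hq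
  have h2 : ∀ k : ℕ, (0:ℝ) < 2 ^ k := fun k => by positivity
  have hle : ∀ k, q k ≤ c := by
    intro k
    rw [hq, div_le_iff₀ (h2 k)]
    exact Nat.floor_le (by positivity)
  have hge : ∀ k, c - (1/2) ^ k ≤ q k := by
    intro k
    have h3 : c * 2 ^ k ≤ (⌊c * 2 ^ k⌋₊ : ℝ) + 1 := (Nat.lt_floor_add_one _).le
    have h4 : (1/2:ℝ) ^ k * 2 ^ k = 1 := by
      rw [one_div, inv_pow, inv_mul_cancel₀ (h2 k).ne']
    show c - (1/2) ^ k ≤ (⌊c * 2 ^ k⌋₊ : ℝ) / 2 ^ k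
    rw [le_div_iff₀ (h2 k)]
    nlinarith
  have htend : Filter.Tendsto q Filter.atTop (nhds c) := by
    have h1 : Filter.Tendsto (fun k : ℕ => c - (1/2 : ℝ) ^ k) Filter.atTop (nhds (c - 0)) :=
      Filter.Tendsto.const_sub c (tendsto_pow_atTop_nhds_zero_of_lt_one (by norm_num) (by norm_num))
    rw [sub_zero] at h1
    exact tendsto_of_tendsto_of_tendsto_of_le_of_le h1 tendsto_const_nhds hge hle
  have : Filter.Tendsto (fun k => q k • a) Filter.atTop (nhds (c • a)) :=
    htend.smul_const a
  refine isClosed_nonneg.mem_of_tendsto this (Filter.Eventually.of_forall fun k => ?_)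
  show 0 ≤ q k • a
  exact dyadic_smul_nonneg ha _ k

instance (priority := 100) : PosSMulMono ℝ Y where
  smul_le_smul_of_nonneg_left c hc a b hab := by
    have := real_smul_nonneg hc (sub_nonneg.2 hab)
    rw [smul_sub] at this
    exact sub_nonneg.1 this
end PosCone

section Support
variable {E Y : Type*} [NormedAddCommGroup E] [NormedSpace ℝ E]
  [NormedAddCommGroup Y] [Lattice Y] [HasSolidNorm Y] [IsOrderedAddMonoid Y] [NormedSpace ℝ Y] {n : ℕ}

open Finset Pointwise RealInnerProductSpace
open scoped Classical

/-- embedding of coefficient space into Euclidean space -/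
def toW {n : ℕ} : (Fin n → ℝ) → EuclideanSpace ℝ (Fin n) := (WithLp.equiv 2 (Fin n → ℝ)).symm

lemma toW_apply (a : Fin n → ℝ) (i : Fin n) : toW a i = a i := rfl

/-- `φ ↦ (φ (z i))ᵢ` as a linear map into Euclidean space -/
def Rmap (z : Fin n → E) : (E →L[ℝ] ℝ) →ₗ[ℝ] EuclideanSpace ℝ (Fin n) where
  toFun := fun φ => toW (fun i => φ (z i))
  map_add' := fun φ ψ => rfl
  map_smul' := fun c φ => rfl

/-- the range of `φ ↦ (φ (z i))ᵢ` as a submodule of Euclidean space -/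
def rangeR (z : Fin n → E) : Submodule ℝ (EuclideanSpace ℝ (Fin n)) :=
  LinearMap.range (Rmap z)

lemma mem_rangeR {z : Fin n → E} {w : EuclideanSpace ℝ (Fin n)} :
    w ∈ rangeR z ↔ ∃ φ : E →L[ℝ] ℝ, toW (fun i => φ (z i)) = w := LinearMap.mem_range

lemma orth_eq_zero {z : Fin n → E} {v : EuclideanSpace ℝ (Fin n)}
    (hv : v ∈ (rangeR z)ᗮ) : ∑ i, v i • z i = 0 := by
  apply NormedSpace.eq_zero_of_forall_dual_eq_zero ℝ
  intro φ
  have h1 : ⟪v, toW (fun i => φ (z i))⟫ = 0 :=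
    (Submodule.mem_orthogonal' _ _).1 hv _ ⟨φ, rfl⟩
  rw [PiLp.inner_apply] at h1
  simp only [RCLike.inner_apply, conj_trivial, toW_apply] at h1
  rw [map_sum]
  simp only [map_smul]
  rw [← h1]
  simp [smul_eq_mul, mul_comm]

/-- the separation step: every coefficient vector of `P` lies in
`conv(Q) + (rangeR z)ᗮ` -/
lemma mem_conv_add_orth (z : Fin n → E) (P Q : NFHalf n)
    (H : ∀ φ : E →L[ℝ] ℝ, P.eval (fun i => φ (z i)) ≤ Q.eval (fun i => φ (z i)))
    {a : Fin n → ℝ} (ha : a ∈ P.s) :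
    toW a ∈ convexHull ℝ (↑(Q.s.image toW) : Set (EuclideanSpace ℝ (Fin n)))
      + ((rangeR z)ᗮ : Set (EuclideanSpace ℝ (Fin n))) := by
  classical
  set W := EuclideanSpace ℝ (Fin n)
  set K : Set W := convexHull ℝ (↑(Q.s.image toW)) + ((rangeR z)ᗮ : Set W) with hK
  by_contra hmem
  have hconv : Convex ℝ K := (convex_convexHull ℝ _).add ((rangeR z)ᗮ).convex
  have hclosed : IsClosed K := by
    apply IsClosed.add_left_of_isCompact
    · exact Submodule.closed_of_finiteDimensional _
    · exact (Q.s.image toW).finite_toSet.isCompact_convexHull ℝ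
  obtain ⟨f, u, hfu, hua⟩ := geometric_hahn_banach_closed_point hconv hclosed hmem
  -- f vanishes on (rangeR z)ᗮ
  obtain ⟨b0, hb0⟩ := Q.ne
  have hb0K : ∀ v ∈ (rangeR z)ᗮ, toW b0 + v ∈ K := by
    intro v hv
    exact Set.add_mem_add (subset_convexHull ℝ _
      (by exact_mod_cast Finset.mem_image_of_mem toW hb0)) hv
  have hfv : ∀ v ∈ (rangeR z)ᗮ, f v = 0 := by
    intro v hv
    by_contra hne
    have hb : ∀ t : ℝ, f (toW b0) + t * f v < u := by
      intro t
      have := hfu _ (hb0K (t • v) (Submodule.smul_mem _ t hv))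
      rwa [map_add, map_smul, smul_eq_mul] at this
    rcases lt_or_gt_of_ne hne with hneg | hpos
    · have := hb ((u - f (toW b0)) / f v)
      rw [div_mul_cancel₀ _ (by linarith)] at this
      linarith
    · have := hb ((u - f (toW b0)) / f v)
      rw [div_mul_cancel₀ _ (by linarith)] at this
      linarith
  -- Riesz representation
  set t0 : W := (InnerProductSpace.toDual ℝ W).symm f with ht0
  have ht0w : ∀ w : W, ⟪t0, w⟫ = f w := fun w => InnerProductSpace.toDual_symm_apply
  have ht0mem : t0 ∈ ((rangeR z)ᗮ)ᗮ := by
    intro v hv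
    rw [real_inner_comm, ht0w]
    exact hfv v hv
  rw [Submodule.orthogonal_orthogonal] at ht0mem
  obtain ⟨φ, hφ⟩ := mem_rangeR.1 ht0mem
  -- compute f on coefficient vectors
  have hfb : ∀ b : Fin n → ℝ, f (toW b) = dotv b (fun i => φ (z i)) := by
    intro b
    rw [← ht0w, ← hφ, PiLp.inner_apply]
    simp only [RCLike.inner_apply, conj_trivial, toW_apply]
    rw [dotv]
    congr 1
  have hchain : dotv a (fun i => φ (z i)) ≤ Q.eval (fun i => φ (z i)) :=
    le_trans (Finset.le_sup' (fun a => dotv a (fun i => φ (z i))) ha) (H φ)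
  have hQu : Q.eval (fun i => φ (z i)) < u := by
    rw [NFHalf.eval]
    rw [Finset.sup'_lt_iff]
    intro b hb
    rw [← hfb]
    apply hfu
    have hmem2 : toW b + 0 ∈ K := Set.add_mem_add (subset_convexHull ℝ _
      (by exact_mod_cast Finset.mem_image_of_mem toW hb)) (Submodule.zero_mem _)
    rwa [add_zero] at hmem2
  have : f (toW a) < u := by
    rw [hfb]
    exact lt_of_le_of_lt hchain hQu
  linarith
/-- the linear evaluation map `W →ₗ Y`, `w ↦ ∑ wᵢ • T zᵢ` -/
def SY (T : E →L[ℝ] Y) (z : Fin n → E) : EuclideanSpace ℝ (Fin n) →ₗ[ℝ] Y where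
  toFun := fun w => ∑ i, w i • T (z i)
  map_add' := fun w₁ w₂ => by
    simp only [PiLp.add_apply, add_smul, Finset.sum_add_distrib]
  map_smul' := fun c w => by
    simp only [PiLp.smul_apply, smul_eq_mul, RingHom.id_apply, Finset.smul_sum, smul_smul]

lemma SY_toW (T : E →L[ℝ] Y) (z : Fin n → E) (b : Fin n → ℝ) :
    SY T z (toW b) = dotv b (fun i => T (z i)) := rfl

lemma SY_orth (T : E →L[ℝ] Y) (z : Fin n → E) {v : EuclideanSpace ℝ (Fin n)}
    (hv : v ∈ (rangeR z)ᗮ) : SY T z v = 0 := by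
  have h0 : ∑ i, v i • z i = 0 := orth_eq_zero hv
  have : SY T z v = T (∑ i, v i • z i) := by
    rw [map_sum]
    simp only [map_smul]
    rfl
  rw [this, h0, map_zero]

/-- The key one-sided support lemma. -/
lemma support_le (T : E →L[ℝ] Y) (z : Fin n → E) (P Q : NFHalf n)
    (H : ∀ φ : E →L[ℝ] ℝ, P.eval (fun i => φ (z i)) ≤ Q.eval (fun i => φ (z i))) :
    P.eval (fun i => T (z i)) ≤ Q.eval (fun i => T (z i)) := by
  classical
  apply Finset.sup'_le
  intro a ha
  obtain ⟨q, hq, v, hv, hqv⟩ := mem_conv_add_orth z P Q H ha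
  -- decompose and evaluate
  have hqv' : q + v = toW a := hqv
  have heval : dotv a (fun i => T (z i)) = SY T z q + SY T z v := by
    rw [← map_add, hqv', SY_toW]
  rw [heval, SY_orth T z hv, add_zero]
  -- q is a convex combination of the elements of Q
  rw [Finset.convexHull_eq] at hq
  obtain ⟨w, hw0, hw1, hwq⟩ := hq
  have hs : SY T z q = ∑ y ∈ Q.s.image toW, w y • SY T z y := by
    rw [← hwq, Finset.centerMass_eq_of_sum_1 _ _ hw1, map_sum]
    simp only [map_smul, id]
  rw [hs]
  have hbound : ∀ y ∈ Q.s.image toW, w y • SY T z y ≤ w y • Q.eval (fun i => T (z i)) := by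
    intro y hy
    obtain ⟨b, hb, rfl⟩ := Finset.mem_image.1 hy
    apply smul_le_smul_of_nonneg_left _ (hw0 _ hy)
    rw [SY_toW]
    exact Finset.le_sup' (fun a => dotv a (fun i => T (z i))) hb
  calc ∑ y ∈ Q.s.image toW, w y • SY T z y
      ≤ ∑ y ∈ Q.s.image toW, w y • Q.eval (fun i => T (z i)) :=
        Finset.sum_le_sum hbound
    _ = Q.eval (fun i => T (z i)) := by
        rw [← Finset.sum_smul, hw1, one_smul]

end Support


section Assembly
open Classical
variable {E Y : Type*} [NormedAddCommGroup E] [NormedSpace ℝ E]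
  [NormedAddCommGroup Y] [Lattice Y] [HasSolidNorm Y] [IsOrderedAddMonoid Y] [NormedSpace ℝ Y] {n m : ℕ}

lemma NFHalf.eval_pointwise {ι : Type*} (h : NFHalf n) (x : Fin n → (ι → ℝ)) (φ : ι) :
    h.eval x φ = h.eval (fun i => x i φ) := by
  rw [NFHalf.eval, NFHalf.eval, Finset.sup'_apply]
  congr 1
  ext a
  simp [dotv, Finset.sum_apply]

/-- well-definedness with a common tuple of vectors -/
lemma wd_same (T : E →L[ℝ] Y) (z : Fin n → E) (F G : LatExpr n)
    (h : F.eval (fun i => hat (z i)) = G.eval (fun i => hat (z i))) :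
    F.eval (fun i => T (z i)) = G.eval (fun i => T (z i)) := by
  rw [LatExpr.eval_nf, LatExpr.eval_nf] at h ⊢
  rw [NF.eval, NF.eval, sub_eq_sub_iff_add_eq_add] at h ⊢
  rw [← NFHalf.eval_addH, ← NFHalf.eval_addH] at h ⊢
  have hpt : ∀ φ : E →L[ℝ] ℝ,
      (F.nf.pos.addH G.nf.neg).eval (fun i => φ (z i))
        = (G.nf.pos.addH F.nf.neg).eval (fun i => φ (z i)) := by
    intro φ
    have := congrFun h φ
    rwa [NFHalf.eval_pointwise, NFHalf.eval_pointwise] at this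
  exact le_antisymm
    (support_le T z _ _ fun φ => le_of_eq (hpt φ))
    (support_le T z _ _ fun φ => ge_of_eq (hpt φ))

/-- renaming of variables -/
def LatExpr.rename (ρ : Fin n → Fin m) : LatExpr n → LatExpr m
  | .var i => .var (ρ i)
  | .smul c F => .smul c (F.rename ρ)
  | .add F G => .add (F.rename ρ) (G.rename ρ)
  | .sup F G => .sup (F.rename ρ) (G.rename ρ)
  | .inf F G => .inf (F.rename ρ) (G.rename ρ)

lemma LatExpr.eval_rename {X : Type*} [AddCommGroup X] [Lattice X] [Module ℝ X]
    (ρ : Fin n → Fin m) (F : LatExpr n) (x : Fin m → X) :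
    (F.rename ρ).eval x = F.eval (fun i => x (ρ i)) := by
  induction F with
  | var i => rfl
  | smul c F ih => simp [LatExpr.rename, LatExpr.eval, ih]
  | add F G ihF ihG => simp [LatExpr.rename, LatExpr.eval, ihF, ihG]
  | sup F G ihF ihG => simp [LatExpr.rename, LatExpr.eval, ihF, ihG]
  | inf F G ihF ihG => simp [LatExpr.rename, LatExpr.eval, ihF, ihG]

lemma eval_append_left {X : Type*} [AddCommGroup X] [Lattice X] [Module ℝ X]
    (F : LatExpr n) (u : E → X) (x : Fin n → E) (y : Fin m → E) :
    (F.rename (Fin.castAdd m)).eval (fun i => u (Fin.append x y i))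
      = F.eval (fun i => u (x i)) := by
  rw [LatExpr.eval_rename]
  congr 1
  ext i
  rw [Fin.append_left]

lemma eval_append_right {X : Type*} [AddCommGroup X] [Lattice X] [Module ℝ X]
    (G : LatExpr m) (u : E → X) (x : Fin n → E) (y : Fin m → E) :
    (G.rename (Fin.natAdd n)).eval (fun i => u (Fin.append x y i))
      = G.eval (fun j => u (y j)) := by
  rw [LatExpr.eval_rename]
  congr 1
  ext j
  rw [Fin.append_right]

/-- general well-definedness -/
lemma wd (T : E →L[ℝ] Y) (x : Fin n → E) (y : Fin m → E) (F : LatExpr n) (G : LatExpr m)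
    (h : F.eval (fun i => hat (x i)) = G.eval (fun j => hat (y j))) :
    F.eval (fun i => T (x i)) = G.eval (fun j => T (y j)) := by
  have h' : (F.rename (Fin.castAdd m)).eval (fun i => hat (Fin.append x y i))
      = (G.rename (Fin.natAdd n)).eval (fun i => hat (Fin.append x y i)) := by
    rw [eval_append_left, eval_append_right, h]
  have := wd_same T (Fin.append x y) _ _ h'
  rwa [eval_append_left, eval_append_right] at this

/-- the extension `T̂` -/
noncomputable def ThMap (T : E →L[ℝ] Y) : ((E →L[ℝ] ℝ) → ℝ) → Y := fun f =>
  if h : ∃ p : Σ n : ℕ, LatExpr n × (Fin n → E),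
      f = p.2.1.eval (fun i => hat (p.2.2 i))
  then h.choose.2.1.eval (fun i => T (h.choose.2.2 i)) else 0

lemma ThMap_spec (T : E →L[ℝ] Y) (f : (E →L[ℝ] ℝ) → ℝ) (F : LatExpr n) (x : Fin n → E)
    (hf : f = F.eval (fun i => hat (x i))) :
    ThMap T f = F.eval (fun i => T (x i)) := by
  have hex : ∃ p : Σ k : ℕ, LatExpr k × (Fin k → E),
      f = p.2.1.eval (fun i => hat (p.2.2 i)) := ⟨⟨n, F, x⟩, hf⟩
  rw [ThMap, dif_pos hex]
  exact wd T _ _ _ _ (hex.choose_spec.symm.trans hf)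

/-- every element of the generated sublattice is represented by an expression -/
lemma gen_rep {f : (E →L[ℝ] ℝ) → ℝ} (hf : Gen (Set.range (hat (E := E))) f) :
    ∃ (n : ℕ) (F : LatExpr n) (x : Fin n → E), f = F.eval (fun i => hat (x i)) := by
  induction hf with
  | of h =>
      obtain ⟨x, rfl⟩ := h
      exact ⟨1, .var 0, fun _ => x, rfl⟩
  | add hf hg ihf ihg =>
      obtain ⟨n, F, x, rfl⟩ := ihf
      obtain ⟨m, G, y, rfl⟩ := ihg
      refine ⟨n + m, .add (F.rename (Fin.castAdd m)) (G.rename (Fin.natAdd n)),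
        Fin.append x y, ?_⟩
      rw [LatExpr.eval, eval_append_left, eval_append_right]
  | smul c hf ihf =>
      obtain ⟨n, F, x, rfl⟩ := ihf
      exact ⟨n, .smul c F, x, rfl⟩
  | sup hf hg ihf ihg =>
      obtain ⟨n, F, x, rfl⟩ := ihf
      obtain ⟨m, G, y, rfl⟩ := ihg
      refine ⟨n + m, .sup (F.rename (Fin.castAdd m)) (G.rename (Fin.natAdd n)),
        Fin.append x y, ?_⟩
      rw [LatExpr.eval, eval_append_left, eval_append_right]
  | inf hf hg ihf ihg =>
      obtain ⟨n, F, x, rfl⟩ := ihf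
      obtain ⟨m, G, y, rfl⟩ := ihg
      refine ⟨n + m, .inf (F.rename (Fin.castAdd m)) (G.rename (Fin.natAdd n)),
        Fin.append x y, ?_⟩
      rw [LatExpr.eval, eval_append_left, eval_append_right]

end Assembly

/-- there is a well-defined lattice homomorphism `T̂ : L → Y` sending
`F(x̂_1, …, x̂_n)` to `F(Tx_1, …, Tx_n)`; it extends `T`. -/
theorem statement16 {E Y : Type*} [NormedAddCommGroup E] [NormedSpace ℝ E]
    [NormedAddCommGroup Y] [Lattice Y] [HasSolidNorm Y] [IsOrderedAddMonoid Y] [NormedSpace ℝ Y]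
    (T : E →L[ℝ] Y) (hT : ‖T‖ ≤ 1) :
    ∃ Th : ((E →L[ℝ] ℝ) → ℝ) → Y,
      (∀ x : E, Th (hat x) = T x) ∧
      (∀ (n : ℕ) (F : LatExpr n) (x : Fin n → E),
        Th (F.eval (fun i => hat (x i))) = F.eval (fun i => T (x i))) ∧
      (∀ f g, Gen (Set.range (hat (E := E))) f → Gen (Set.range (hat (E := E))) g →
        Th (f + g) = Th f + Th g) ∧
      (∀ (c : ℝ) f, Gen (Set.range (hat (E := E))) f → Th (c • f) = c • Th f) ∧
      (∀ f g, Gen (Set.range (hat (E := E))) f → Gen (Set.range (hat (E := E))) g →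
        Th (f ⊔ g) = Th f ⊔ Th g) ∧
      (∀ f g, Gen (Set.range (hat (E := E))) f → Gen (Set.range (hat (E := E))) g →
        Th (f ⊓ g) = Th f ⊓ Th g) := by
  classical
  refine ⟨ThMap T, ?_, ?_, ?_, ?_, ?_, ?_⟩
  · intro x
    have : hat x = (LatExpr.var 0).eval (fun i : Fin 1 => hat (![x] i)) := by
      simp [LatExpr.eval]
    rw [ThMap_spec T _ _ _ this]
    simp [LatExpr.eval]
  · intro n F x
    exact ThMap_spec T _ F x rfl
  · intro f g hf hg
    obtain ⟨n, F, x, rfl⟩ := gen_rep hf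
    obtain ⟨m, G, y, rfl⟩ := gen_rep hg
    have hrep : (F.eval fun i => hat (x i)) + (G.eval fun j => hat (y j))
        = (LatExpr.add (F.rename (Fin.castAdd m)) (G.rename (Fin.natAdd n))).eval
            (fun i => hat (Fin.append x y i)) := by
      rw [LatExpr.eval, eval_append_left, eval_append_right]
    rw [ThMap_spec T _ _ _ hrep, ThMap_spec T _ F x rfl, ThMap_spec T _ G y rfl,
      LatExpr.eval, eval_append_left, eval_append_right]
  · intro c f hf
    obtain ⟨n, F, x, rfl⟩ := gen_rep hf
    have hrep : c • (F.eval fun i => hat (x i))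
        = (LatExpr.smul c F).eval (fun i => hat (x i)) := rfl
    rw [ThMap_spec T _ _ _ hrep, ThMap_spec T _ F x rfl, LatExpr.eval]
  · intro f g hf hg
    obtain ⟨n, F, x, rfl⟩ := gen_rep hf
    obtain ⟨m, G, y, rfl⟩ := gen_rep hg
    have hrep : (F.eval fun i => hat (x i)) ⊔ (G.eval fun j => hat (y j))
        = (LatExpr.sup (F.rename (Fin.castAdd m)) (G.rename (Fin.natAdd n))).eval
            (fun i => hat (Fin.append x y i)) := by
      rw [LatExpr.eval, eval_append_left, eval_append_right]
    rw [ThMap_spec T _ _ _ hrep, ThMap_spec T _ F x rfl, ThMap_spec T _ G y rfl,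
      LatExpr.eval, eval_append_left, eval_append_right]
  · intro f g hf hg
    obtain ⟨n, F, x, rfl⟩ := gen_rep hf
    obtain ⟨m, G, y, rfl⟩ := gen_rep hg
    have hrep : (F.eval fun i => hat (x i)) ⊓ (G.eval fun j => hat (y j))
        = (LatExpr.inf (F.rename (Fin.castAdd m)) (G.rename (Fin.natAdd n))).eval
            (fun i => hat (Fin.append x y i)) := by
      rw [LatExpr.eval, eval_append_left, eval_append_right]
    rw [ThMap_spec T _ _ _ hrep, ThMap_spec T _ F x rfl, ThMap_spec T _ G y rfl,
      LatExpr.eval, eval_append_left, eval_append_right]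
end
end
end

section
/- Let A be a set and f a nonzero element of the sublattice L of ℝ^(ℝ^A) generated by the evaluation functionals {δ_a : a ∈ A}. Then there exists x ∈ ℝ^A with |x(a)| ≤ 1 for all a ∈ A and f(x) ≠ 0. -/
noncomputable section

/-- Every element of the generated sublattice is positively homogeneous. -/
lemma gen_homog {A : Type*} {f : (A → ℝ) → ℝ}
    (hf : Gen (Set.range (delta (A := A))) f) :
    ∀ t : ℝ, 0 ≤ t → ∀ x : A → ℝ, f (t • x) = t * f x := by
  induction hf with
  | of h =>
    obtain ⟨a, rfl⟩ := h
    intro t ht x; simp [delta]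
  | add hg hh ihg ihh =>
    intro t ht x
    simp only [Pi.add_apply, ihg t ht x, ihh t ht x]; ring
  | smul c hg ihg =>
    intro t ht x
    simp only [Pi.smul_apply, smul_eq_mul, ihg t ht x]; ring
  | sup hg hh ihg ihh =>
    intro t ht x
    simp only [Pi.sup_apply, ihg t ht x, ihh t ht x]
    exact (mul_max_of_nonneg _ _ ht).symm
  | inf hg hh ihg ihh =>
    intro t ht x
    simp only [Pi.inf_apply, ihg t ht x, ihh t ht x]
    exact (mul_min_of_nonneg _ _ ht).symm

/-- Every element of the generated sublattice depends only on finitely many coordinates. -/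
lemma gen_finiteDep {A : Type*} {f : (A → ℝ) → ℝ}
    (hf : Gen (Set.range (delta (A := A))) f) :
    ∃ s : Set A, s.Finite ∧ ∀ x y : A → ℝ, (∀ a ∈ s, x a = y a) → f x = f y := by
  induction hf with
  | of h =>
    obtain ⟨a, rfl⟩ := h
    exact ⟨{a}, Set.finite_singleton a, fun x y h => h a rfl⟩
  | add hg hh ihg ihh =>
    obtain ⟨s, hs, hsd⟩ := ihg
    obtain ⟨u, hu, hud⟩ := ihh
    exact ⟨s ∪ u, hs.union hu, fun x y h => by
      simp only [Pi.add_apply,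
        hsd x y (fun a ha => h a (Or.inl ha)), hud x y (fun a ha => h a (Or.inr ha))]⟩
  | smul c hg ihg =>
    obtain ⟨s, hs, hsd⟩ := ihg
    exact ⟨s, hs, fun x y h => by simp only [Pi.smul_apply, hsd x y h]⟩
  | sup hg hh ihg ihh =>
    obtain ⟨s, hs, hsd⟩ := ihg
    obtain ⟨u, hu, hud⟩ := ihh
    exact ⟨s ∪ u, hs.union hu, fun x y h => by
      simp only [Pi.sup_apply,
        hsd x y (fun a ha => h a (Or.inl ha)), hud x y (fun a ha => h a (Or.inr ha))]⟩
  | inf hg hh ihg ihh =>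
    obtain ⟨s, hs, hsd⟩ := ihg
    obtain ⟨u, hu, hud⟩ := ihh
    exact ⟨s ∪ u, hs.union hu, fun x y h => by
      simp only [Pi.inf_apply,
        hsd x y (fun a ha => h a (Or.inl ha)), hud x y (fun a ha => h a (Or.inr ha))]⟩

/-- a nonzero `f ∈ L` is nonzero at some point of the cube
`{x : sup_a |x a| ≤ 1}`. -/
theorem statement18 {A : Type*} (f : (A → ℝ) → ℝ)
    (hf : Gen (Set.range (delta (A := A))) f) (hne : f ≠ 0) :
    ∃ x : A → ℝ, (∀ a, |x a| ≤ 1) ∧ f x ≠ 0 := by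
  classical
  obtain ⟨x₀, hx₀⟩ : ∃ x₀, f x₀ ≠ 0 := by
    by_contra h
    push_neg at h
    exact hne (funext h)
  obtain ⟨s, hs, hsd⟩ := gen_finiteDep hf
  -- bound on s
  obtain ⟨C, hC⟩ : ∃ C, ∀ a ∈ s, |x₀ a| ≤ C := by
    obtain ⟨C, hC⟩ := (hs.image (fun a => |x₀ a|)).bddAbove
    exact ⟨C, fun a ha => hC ⟨a, ha, rfl⟩⟩
  set D : ℝ := max C 0 + 1 with hD
  have hDpos : 0 < D := by positivity
  set t : ℝ := D⁻¹ with ht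
  have htpos : 0 < t := by positivity
  refine ⟨fun a => if a ∈ s then t * x₀ a else 0, ?_, ?_⟩
  · intro a
    by_cases ha : a ∈ s
    · simp only [ha, if_pos]
      rw [abs_mul, abs_of_pos htpos]
      calc t * |x₀ a| ≤ t * D := by
            apply mul_le_mul_of_nonneg_left _ htpos.le
            calc |x₀ a| ≤ C := hC a ha
              _ ≤ D := by simp [hD]; linarith [le_max_left C 0]
        _ = 1 := inv_mul_cancel₀ hDpos.ne'
    · simp [ha]
  · have h1 : f (fun a => if a ∈ s then t * x₀ a else 0) = f (t • x₀) := by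
      apply hsd
      intro a ha
      simp [ha]
    rw [h1, gen_homog hf t htpos.le]
    exact mul_ne_zero htpos.ne' hx₀
end
end
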